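/- Let Φ = (u,v) ∈ C_γ^− and set G_Φ(s) := g(u(s)+η(s), v(s)+ξ(s)) for s ≤ 0. Then the following are equivalent: (i) for all τ ≤ t ≤ 0, v(t) = e^{B(t−τ)} v(τ) + ∫_τ^t e^{B(t−s)} G_Φ(s) ds; (ii) for all t ≤ 0, the integral ∫_{−∞}^t e^{B(t−s)} G_Φ(s) ds converges absolutely and v(t) = ∫_{−∞}^t e^{B(t−s)} G_Φ(s) ds. -/

import Mathlib

open MeasureTheory Set Filter

noncomputable section

/-- `ℝ^n` with the Euclidean norm. -/
abbrev Vec (n : ℕ) := EuclideanSpace ℝ (Fin n)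

/-- Action of an `n × n` real matrix on `ℝ^n`. -/
noncomputable def mApply {n : ℕ} (M : Matrix (Fin n) (Fin n) ℝ) (x : Vec n) : Vec n :=
  Matrix.toEuclideanLin M x

/-- The matrix exponential `e^{tA}`. -/
noncomputable def expM {n : ℕ} (A : Matrix (Fin n) (Fin n) ℝ) (t : ℝ) :
    Matrix (Fin n) (Fin n) ℝ :=
  NormedSpace.exp (t • A)

/-- The norm `‖u‖_γ^- = sup_{t ≤ 0} e^{γ t} ‖u t‖` on `C_γ^-`. -/
noncomputable def cNorm {n : ℕ} (γ : ℝ) (u : ℝ → Vec n) : ℝ :=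
  sSup ((fun t => Real.exp (γ * t) * ‖u t‖) '' Iic (0:ℝ))

/-- Membership in the Banach space `C_γ^-`: continuity on `(-∞, 0]` together with
finiteness of the norm `sup_{t ≤ 0} e^{γ t} ‖u t‖`. -/
def memCneg {n : ℕ} (γ : ℝ) (u : ℝ → Vec n) : Prop :=
  ContinuousOn u (Iic 0) ∧
    BddAbove ((fun t => Real.exp (γ * t) * ‖u t‖) '' Iic (0:ℝ))

/-- The `A`-component of the Lyapunov–Perron map:
`K_A^ε(Φ)(t) = e^{εAt} u₀ + ε ∫_0^t e^{εA(t-s)} f(u(s)+η(s), v(s)+ξ(s)) ds`. -/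
noncomputable def KA {n : ℕ} (A : Matrix (Fin n) (Fin n) ℝ) (ε : ℝ) (u₀ : Vec n)
    (f : Vec n → Vec n → Vec n) (η ξ u v : ℝ → Vec n) (t : ℝ) : Vec n :=
  mApply (expM A (ε * t)) u₀ +
    ε • ∫ s in (0:ℝ)..t, mApply (expM A (ε * (t - s))) (f (u s + η s) (v s + ξ s))

/-- The `B`-component of the Lyapunov–Perron map:
`K_B^ε(Φ)(t) = ∫_{-∞}^t e^{B(t-s)} g(u(s)+η(s), v(s)+ξ(s)) ds`. -/
noncomputable def KB {n : ℕ} (B : Matrix (Fin n) (Fin n) ℝ)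
    (g : Vec n → Vec n → Vec n) (η ξ u v : ℝ → Vec n) (t : ℝ) : Vec n :=
  ∫ s in Iic t, mApply (expM B (t - s)) (g (u s + η s) (v s + ξ s))

/-!
The semigroup decays like `e^{-γ_B (t-s)}` while `v` and `G_Φ` grow at most like `e^{-γ s}` as
`s → -∞`, so `e^{B(t-s)} G_Φ(s)` and `e^{B(t-τ)} v(τ)` are bounded by multiples of
`e^{(γ_B - γ) s}` and `e^{(γ_B - γ) τ}`. Since `γ < γ_B`, the Lyapunov–Perron integral converges
absolutely and `e^{B(t-τ)} v(τ) → 0`; letting `τ → -∞` in (i) gives (ii). Conversely,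
`e^{B(t-τ)} ∫_{-∞}^τ e^{B(τ-s)} G_Φ(s) ds = ∫_{-∞}^τ e^{B(t-s)} G_Φ(s) ds` by the semigroup law,
and splitting `(-∞, t]` at `τ` gives (i).
-/

open Topology

section Semigroup

variable {E : Type*} [NormedAddCommGroup E] [NormedSpace ℝ E]

theorem eq_integral_Iic_of_forall_eq_add_intervalIntegral {f w : ℝ → E} {x : E} {t : ℝ}
    (hf : IntegrableOn f (Iic t)) (hw : Tendsto w atBot (𝓝 0))
    (h : ∀ τ ≤ t, x = w τ + ∫ s in τ..t, f s) :
    x = ∫ s in Iic t, f s := by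
  have hlim : Tendsto (fun τ => w τ + ∫ s in τ..t, f s) atBot (𝓝 (∫ s in Iic t, f s)) := by
    simpa using hw.add (intervalIntegral_tendsto_integral_Iic t hf tendsto_id)
  refine tendsto_nhds_unique (tendsto_const_nhds.congr' ?_) hlim
  filter_upwards [eventually_le_atBot t] with τ hτ using h τ hτ

variable {T : ℝ → E →L[ℝ] E}

theorem integral_Iic_eq_apply_integral_Iic_add_intervalIntegral [CompleteSpace E]
    (hT : ∀ a b, T (a + b) = (T a).comp (T b)) {G : ℝ → E} {τ t : ℝ} (hτt : τ ≤ t)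
    (hτ : IntegrableOn (fun s => T (τ - s) (G s)) (Iic τ))
    (ht : IntegrableOn (fun s => T (t - s) (G s)) (Iic t)) :
    ∫ s in Iic t, T (t - s) (G s) =
      T (t - τ) (∫ s in Iic τ, T (τ - s) (G s)) + ∫ s in τ..t, T (t - s) (G s) := by
  have hcomp : T (t - τ) (∫ s in Iic τ, T (τ - s) (G s)) = ∫ s in Iic τ, T (t - s) (G s) := by
    rw [← ContinuousLinearMap.integral_comp_comm _ hτ]
    congr! 2 with s
    rw [← ContinuousLinearMap.comp_apply, ← hT, sub_add_sub_cancel]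
  rw [hcomp, intervalIntegral.integral_of_le hτt,
    ← setIntegral_union (Iic_disjoint_Ioc le_rfl) measurableSet_Ioc
      (ht.mono_set (Iic_subset_Iic.2 hτt)) (ht.mono_set Ioc_subset_Iic_self),
    Iic_union_Ioc_eq_Iic hτt]

variable {γ γB C : ℝ}

theorem norm_apply_le_of_exp_bound
    (hTB : ∀ r ≥ (0:ℝ), ∀ y, ‖T r y‖ ≤ Real.exp (-γB * r) * ‖y‖)
    {y : E} {s t : ℝ} (hst : s ≤ t) (hy : ‖y‖ ≤ C * Real.exp (-γ * s)) :
    ‖T (t - s) y‖ ≤ C * Real.exp (-γB * t) * Real.exp ((γB - γ) * s) :=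
  calc ‖T (t - s) y‖ ≤ Real.exp (-γB * (t - s)) * ‖y‖ := hTB _ (sub_nonneg.2 hst) y
    _ ≤ Real.exp (-γB * (t - s)) * (C * Real.exp (-γ * s)) := by gcongr
    _ = C * Real.exp (-γB * t) * Real.exp ((γB - γ) * s) := by
      rw [mul_left_comm, ← Real.exp_add, mul_assoc, ← Real.exp_add]; ring_nf

theorem tendsto_apply_atBot_of_exp_bound
    (hTB : ∀ r ≥ (0:ℝ), ∀ y, ‖T r y‖ ≤ Real.exp (-γB * r) * ‖y‖) (hγ : γ < γB)
    {v : ℝ → E} {t : ℝ} (hv : ∀ s ≤ t, ‖v s‖ ≤ C * Real.exp (-γ * s)) :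
    Tendsto (fun τ => T (t - τ) (v τ)) atBot (𝓝 0) := by
  have hexp : Tendsto (fun τ => C * Real.exp (-γB * t) * Real.exp ((γB - γ) * τ))
      atBot (𝓝 0) := by
    simpa using (Real.tendsto_exp_atBot.comp
      (tendsto_id.const_mul_atBot (sub_pos.2 hγ))).const_mul (C * Real.exp (-γB * t))
  refine squeeze_zero_norm' ?_ hexp
  filter_upwards [eventually_le_atBot t] with τ hτ
  exact norm_apply_le_of_exp_bound hTB hτ (hv τ hτ)

theorem integrableOn_apply_Iic_of_exp_bound (hT : Continuous T)
    (hTB : ∀ r ≥ (0:ℝ), ∀ y, ‖T r y‖ ≤ Real.exp (-γB * r) * ‖y‖) (hγ : γ < γB)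
    {G : ℝ → E} {t : ℝ} (hGc : ContinuousOn G (Iic t))
    (hG : ∀ s ≤ t, ‖G s‖ ≤ C * Real.exp (-γ * s)) :
    IntegrableOn (fun s => T (t - s) (G s)) (Iic t) := by
  have hcont : ContinuousOn (fun s => T (t - s) (G s)) (Iic t) :=
    (hT.comp (continuous_const.sub continuous_id)).continuousOn.clm_apply hGc
  refine Integrable.mono' ((integrableOn_exp_mul_Iic (sub_pos.2 hγ) t).const_mul
    (C * Real.exp (-γB * t))) (hcont.aestronglyMeasurable measurableSet_Iic) ?_
  filter_upwards [ae_restrict_mem measurableSet_Iic] with s hs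
  exact norm_apply_le_of_exp_bound hTB hs (hG s hs)

end Semigroup

section Nonlinearity

variable {E F : Type*} [SeminormedAddCommGroup E] [SeminormedAddCommGroup F] {g : E → E → F}
  {L : ℝ}

theorem continuous_uncurry_of_norm_sub_le (hL : 0 ≤ L)
    (hg : ∀ x₁ y₁ x₂ y₂, ‖g x₁ y₁ - g x₂ y₂‖ ≤ L * (‖x₁ - x₂‖ + ‖y₁ - y₂‖)) :
    Continuous (Function.uncurry g) := by
  refine (LipschitzWith.of_dist_le' (K := 2 * L) fun p q => ?_).continuous
  calc dist (g p.1 p.2) (g q.1 q.2) ≤ L * (dist p.1 q.1 + dist p.2 q.2) := by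
        simpa only [dist_eq_norm] using hg p.1 p.2 q.1 q.2
    _ ≤ L * (dist p q + dist p q) := by
        gcongr
        exacts [le_max_left _ _, le_max_right _ _]
    _ = 2 * L * dist p q := by ring

theorem norm_comp_le_of_growth {c γ A B : ℝ} (hL : 0 ≤ L) (hc : 0 ≤ c) (hγ : 0 ≤ γ)
    (hg : ∀ x y, ‖g x y‖ ≤ L * (c + ‖x‖ + ‖y‖)) {a b : ℝ → E}
    (ha : ∀ s ≤ (0:ℝ), ‖a s‖ ≤ A * Real.exp (-γ * s))
    (hb : ∀ s ≤ (0:ℝ), ‖b s‖ ≤ B * Real.exp (-γ * s)) (s : ℝ) (hs : s ≤ 0) :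
    ‖g (a s) (b s)‖ ≤ L * (c + A + B) * Real.exp (-γ * s) := by
  have hexp : 1 ≤ Real.exp (-γ * s) := Real.one_le_exp (by nlinarith)
  calc ‖g (a s) (b s)‖ ≤ L * (c + ‖a s‖ + ‖b s‖) := hg _ _
    _ ≤ L * (c * Real.exp (-γ * s) + A * Real.exp (-γ * s) + B * Real.exp (-γ * s)) := by
        gcongr
        · exact le_mul_of_one_le_right hc hexp
        · exact ha s hs
        · exact hb s hs
    _ = L * (c + A + B) * Real.exp (-γ * s) := by ring

end Nonlinearity

section Matrix

variable {n : ℕ}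

def expCLM (B : Matrix (Fin n) (Fin n) ℝ) (t : ℝ) : Vec n →L[ℝ] Vec n :=
  Matrix.toEuclideanCLM (n := Fin n) (𝕜 := ℝ) (expM B t)

theorem expCLM_apply (B : Matrix (Fin n) (Fin n) ℝ) (t : ℝ) (x : Vec n) :
    expCLM B t x = mApply (expM B t) x :=
  rfl

theorem expCLM_add (B : Matrix (Fin n) (Fin n) ℝ) (a b : ℝ) :
    expCLM B (a + b) = (expCLM B a).comp (expCLM B b) := by
  rw [expCLM, expM, add_smul,
    Matrix.exp_add_of_commute _ _ (((Commute.refl B).smul_left a).smul_right b)]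
  exact map_mul Matrix.toEuclideanCLM _ _

theorem continuous_expM (B : Matrix (Fin n) (Fin n) ℝ) : Continuous (expM B) := by
  -- any Banach-algebra norm inducing the product topology will do
  let _ : NormedRing (Matrix (Fin n) (Fin n) ℝ) := Matrix.linftyOpNormedRing
  let _ : NormedAlgebra ℝ (Matrix (Fin n) (Fin n) ℝ) := Matrix.linftyOpNormedAlgebra
  let _ : NormedAlgebra ℚ (Matrix (Fin n) (Fin n) ℝ) := Matrix.linftyOpNormedAlgebra
  exact NormedSpace.exp_continuous.comp (continuous_id.smul continuous_const)

theorem continuous_expCLM (B : Matrix (Fin n) (Fin n) ℝ) : Continuous (expCLM B) :=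
  (LinearMap.continuous_of_finiteDimensional
    (Matrix.toEuclideanCLM (n := Fin n) (𝕜 := ℝ)).toAlgEquiv.toLinearMap).comp
    (continuous_expM B)

theorem memCneg.exists_norm_le {γ : ℝ} {u : ℝ → Vec n} (hu : memCneg γ u) :
    ∃ K, ∀ s ≤ (0:ℝ), ‖u s‖ ≤ K * Real.exp (-γ * s) := by
  obtain ⟨K, hK⟩ := hu.2
  refine ⟨K, fun s hs => ?_⟩
  rw [neg_mul, Real.exp_neg, ← div_eq_mul_inv, le_div_iff₀' (Real.exp_pos _)]
  exact hK (mem_image_of_mem _ hs)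

theorem memCneg.add {γ : ℝ} {u w : ℝ → Vec n} (hu : memCneg γ u) (hw : memCneg γ w) :
    memCneg γ (u + w) := by
  obtain ⟨a, ha⟩ := hu.2
  obtain ⟨b, hb⟩ := hw.2
  refine ⟨hu.1.add hw.1, a + b, ?_⟩
  rintro _ ⟨s, hs, rfl⟩
  calc Real.exp (γ * s) * ‖(u + w) s‖
      ≤ Real.exp (γ * s) * ‖u s‖ + Real.exp (γ * s) * ‖w s‖ := by
        rw [← mul_add]; gcongr; exact norm_add_le _ _
    _ ≤ a + b := add_le_add (ha (mem_image_of_mem _ hs)) (hb (mem_image_of_mem _ hs))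

end Matrix

theorem statement9_general
    (n : ℕ)
    (B : Matrix (Fin n) (Fin n) ℝ) (γB : ℝ)
    (hB : ∀ t ≥ (0:ℝ), ∀ y : Vec n, ‖mApply (expM B t) y‖ ≤ Real.exp (-γB * t) * ‖y‖)
    (γ : ℝ) (hγ : 0 < γ) (hγγB : γ < γB)
    (g : Vec n → Vec n → Vec n) (Lg Cg : ℝ) (hLg : 0 < Lg) (hCg : 0 < Cg)
    (hgLip : ∀ x₁ y₁ x₂ y₂ : Vec n,
      ‖g x₁ y₁ - g x₂ y₂‖ ≤ Lg * (‖x₁ - x₂‖ + ‖y₁ - y₂‖))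
    (hgGrow : ∀ x y : Vec n, ‖g x y‖ ≤ Lg * (Cg + ‖x‖ + ‖y‖))
    (η ξ : ℝ → Vec n) (hη : memCneg γ η) (hξ : memCneg γ ξ)
    (u v : ℝ → Vec n) (hu : memCneg γ u) (hv : memCneg γ v) :
    (∀ τ t : ℝ, τ ≤ t → t ≤ 0 →
        v t = mApply (expM B (t - τ)) (v τ) +
          ∫ s in τ..t, mApply (expM B (t - s)) (g (u s + η s) (v s + ξ s))) ↔
      (∀ t ≤ (0:ℝ),
        IntegrableOn (fun s => mApply (expM B (t - s)) (g (u s + η s) (v s + ξ s)))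
            (Iic t) volume ∧
          v t = ∫ s in Iic t, mApply (expM B (t - s)) (g (u s + η s) (v s + ξ s))) := by
  simp only [← expCLM_apply] at hB ⊢
  have hGc : ContinuousOn (fun s => g (u s + η s) (v s + ξ s)) (Iic 0) :=
    (continuous_uncurry_of_norm_sub_le hLg.le hgLip).comp_continuousOn
      ((hu.add hη).1.prodMk (hv.add hξ).1)
  obtain ⟨Kx, hKx⟩ := (hu.add hη).exists_norm_le
  obtain ⟨Ky, hKy⟩ := (hv.add hξ).exists_norm_le
  have hGb := norm_comp_le_of_growth hLg.le hCg.le hγ.le hgGrow hKx hKy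
  have hint : ∀ t ≤ (0:ℝ), IntegrableOn
      (fun s => expCLM B (t - s) (g (u s + η s) (v s + ξ s))) (Iic t) := fun t ht =>
    integrableOn_apply_Iic_of_exp_bound (continuous_expCLM B) hB hγγB
      (hGc.mono (Iic_subset_Iic.2 ht)) fun s hs => hGb s (hs.trans ht)
  obtain ⟨Kv, hKv⟩ := hv.exists_norm_le
  constructor
  · intro h t ht
    refine ⟨hint t ht, eq_integral_Iic_of_forall_eq_add_intervalIntegral (hint t ht) ?_
      fun τ hτ => h τ t hτ ht⟩
    exact tendsto_apply_atBot_of_exp_bound hB hγγB fun s hs => hKv s (hs.trans ht)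
  · intro h τ t hτt ht
    rw [(h t ht).2, (h τ (hτt.trans ht)).2]
    exact integral_Iic_eq_apply_integral_Iic_add_intervalIntegral (expCLM_add B) hτt
      (hint τ (hτt.trans ht)) (hint t ht)

/-- for `Φ = (u,v) ∈ C_γ^-`, the variation-of-constants identity on every
interval `[τ, t]` with `τ ≤ t ≤ 0` is equivalent to the Lyapunov–Perron integral
representation `v(t) = ∫_{-∞}^t e^{B(t−s)} G_Φ(s) ds` (with absolute convergence). -/
theorem statement9
    (n : ℕ) (hn : 0 < n)
    (B : Matrix (Fin n) (Fin n) ℝ) (γB : ℝ) (hγB : 0 < γB)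
    (hB : ∀ t ≥ (0:ℝ), ∀ y : Vec n, ‖mApply (expM B t) y‖ ≤ Real.exp (-γB * t) * ‖y‖)
    (γ : ℝ) (hγ : 0 < γ) (hγγB : γ < γB)
    (g : Vec n → Vec n → Vec n) (Lg Cg : ℝ) (hLg : 0 < Lg) (hCg : 0 < Cg)
    (hgLip : ∀ x₁ y₁ x₂ y₂ : Vec n,
      ‖g x₁ y₁ - g x₂ y₂‖ ≤ Lg * (‖x₁ - x₂‖ + ‖y₁ - y₂‖))
    (hgGrow : ∀ x y : Vec n, ‖g x y‖ ≤ Lg * (Cg + ‖x‖ + ‖y‖))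
    (η ξ : ℝ → Vec n) (hη : memCneg γ η) (hξ : memCneg γ ξ)
    (u v : ℝ → Vec n) (hu : memCneg γ u) (hv : memCneg γ v) :
    (∀ τ t : ℝ, τ ≤ t → t ≤ 0 →
        v t = mApply (expM B (t - τ)) (v τ) +
          ∫ s in τ..t, mApply (expM B (t - s)) (g (u s + η s) (v s + ξ s))) ↔
      (∀ t ≤ (0:ℝ),
        IntegrableOn (fun s => mApply (expM B (t - s)) (g (u s + η s) (v s + ξ s)))
            (Iic t) volume ∧
          v t = ∫ s in Iic t, mApply (expM B (t - s)) (g (u s + η s) (v s + ξ s))) :=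
  statement9_general n B γB hB γ hγ hγγB g Lg Cg hLg hCg hgLip hgGrow η ξ hη hξ u v hu hv
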